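/- Let n have exactly k ones in its binary expansion, let E = {e₁ < e₂ < ... < e_{2^k-1}} be the set of essential elements of [n-1], and let S = {e_{i₁},...,e_{iₘ}} ⊆ E with index set Ŝ = {i₁,...,iₘ} ⊆ [2^k - 1]. Then β_n(S) ≡ β_{2^k-1}(Ŝ) (mod 2). -/

import Mathlib

open Finset

/-- The descent set of a permutation of `{1,…,n}` (written as a permutation of `Fin n`),
as a subset of `[n-1] = {1,…,n-1}`: `i` is a descent if `π_i > π_{i+1}` (1-indexed). -/
def descSet (n : ℕ) (π : Equiv.Perm (Fin n)) : Finset ℕ :=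
  (Finset.Icc 1 (n - 1)).filter (fun i =>
    ∃ h : i < n, π ⟨i, h⟩ < π ⟨i - 1, by omega⟩)

/-- `β_n(S)`: the number of permutations of `{1,…,n}` with descent set exactly `S`. -/
def descBeta (n : ℕ) (S : Finset ℕ) : ℕ :=
  (Finset.univ.filter (fun π : Equiv.Perm (Fin n) => descSet n π = S)).card

/-- `α_n(S)`: the number of permutations of `{1,…,n}` with descent set contained in `S`. -/
def descAlpha (n : ℕ) (S : Finset ℕ) : ℕ :=
  (Finset.univ.filter (fun π : Equiv.Perm (Fin n) => descSet n π ⊆ S)).card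

def Essential (n s : ℕ) : Prop := 0 < s ∧ s < n ∧ s &&& n = s

instance (n : ℕ) : DecidablePred (Essential n) := fun s => by
  unfold Essential; infer_instance

/-!
Write `α_n(T)` for the number of permutations of `[n]` whose descents lie in `T`. Splitting a
permutation after position `m` gives `α_n(T ∪ {m}) = C(n, m) · α_m(T)` when `T < m`, so `α_n(T)`
is a multinomial coefficient, and by Lucas's theorem it is odd exactly when `T ∪ {n}` is a chain
for the submask order on binary expansions. Modulo 2, inclusion–exclusion reads
`β_n(S) = ∑_{T ⊆ S} α_n(T)`. Packing the bits of a submask of `n` into the positions of the ones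
of `n` is a bijection from the submasks of `n` onto `[0, 2^k - 1]` that preserves `<` and `&&&`;
it sends the essential elements, in increasing order, to `1, …, 2^k - 2`, and it maps chains to
chains. Hence it preserves the parity of every `α_n(T)` with `T ⊆ S`, and so that of `β_n(S)`.
-/

namespace Nat

theorem land_eq_left_iff_div_two {s n : ℕ} :
    s &&& n = s ↔ s / 2 &&& n / 2 = s / 2 ∧ s % 2 ≤ n % 2 := by
  have hmod := Nat.and_mod_two_eq_one (a := s) (b := n)
  rw [← Nat.and_div_two]
  constructor
  · intro h
    rw [h] at hmod ⊢
    omega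
  · rintro ⟨hdiv, hmod2⟩
    have : (s &&& n) % 2 = s % 2 := by omega
    omega

theorem le_of_land_eq_left {s n : ℕ} (h : s &&& n = s) : s ≤ n :=
  h ▸ Nat.and_le_right

theorem land_eq_left_trans {a b c : ℕ} (hab : a &&& b = a) (hbc : b &&& c = b) :
    a &&& c = a := by
  rw [← hab, Nat.and_assoc, hbc]

theorem odd_choose_iff_land_eq_left (n k : ℕ) : Odd (n.choose k) ↔ k &&& n = k := by
  induction n using Nat.strong_induction_on generalizing k with
  | _ n ih =>
  rcases eq_or_ne n 0 with rfl | hn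
  · cases k <;> simp
  have : Fact (Nat.Prime 2) := ⟨Nat.prime_two⟩
  have lucas : n.choose k ≡ (n % 2).choose (k % 2) * (n / 2).choose (k / 2) [MOD 2] :=
    Choose.choose_modEq_choose_mod_mul_choose_div_nat
  rw [Nat.odd_iff, lucas, ← Nat.odd_iff, Nat.odd_mul, ih (n / 2) (by omega),
    land_eq_left_iff_div_two (s := k), and_comm]
  rcases Nat.mod_two_eq_zero_or_one n with h | h <;>
    rcases Nat.mod_two_eq_zero_or_one k with h' | h' <;> simp [h, h']

theorem land_two_mul_eq_left_iff {s n : ℕ} : s &&& 2 * n = s ↔ s / 2 &&& n = s / 2 ∧ s % 2 = 0 := by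
  rw [land_eq_left_iff_div_two]
  simp only [Nat.mul_div_cancel_left n two_pos, Nat.mul_mod_right, nonpos_iff_eq_zero]

theorem land_two_mul_add_one_eq_left_iff {s n : ℕ} : s &&& 2 * n + 1 = s ↔ s / 2 &&& n = s / 2 := by
  rw [land_eq_left_iff_div_two, show (2 * n + 1) / 2 = n by omega]
  have := Nat.mod_two_eq_zero_or_one s
  exact ⟨And.left, fun h => ⟨h, by omega⟩⟩

end Nat

/-- Parallel bit extraction: the bits of `s` at the positions of the ones of `n`, packed into
consecutive low bits. -/
def bitCompress (n s : ℕ) : ℕ :=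
  if h : n = 0 then 0
  else if n % 2 = 1 then 2 * bitCompress (n / 2) (s / 2) + s % 2
  else bitCompress (n / 2) (s / 2)
termination_by n
decreasing_by all_goals omega

@[simp] theorem bitCompress_zero_left (s : ℕ) : bitCompress 0 s = 0 := by
  rw [bitCompress]; simp

theorem bitCompress_two_mul (n s : ℕ) : bitCompress (2 * n) s = bitCompress n (s / 2) := by
  rcases eq_or_ne n 0 with rfl | hn
  · simp
  rw [bitCompress]; simp [hn]

theorem bitCompress_two_mul_add_one (n s : ℕ) :
    bitCompress (2 * n + 1) s = 2 * bitCompress n (s / 2) + s % 2 := by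
  rw [bitCompress]; simp [Nat.add_div]

@[simp] theorem bitCompress_zero_right (n : ℕ) : bitCompress n 0 = 0 := by
  induction n using Nat.evenOddRec with
  | h0 => simp
  | h_even n ih => simp [bitCompress_two_mul, ih]
  | h_odd n ih => simp [bitCompress_two_mul_add_one, ih]

theorem bitCompress_self (n : ℕ) : bitCompress n n = 2 ^ n.bits.count true - 1 := by
  induction n using Nat.evenOddRec with
  | h0 => simp
  | h_even n ih =>
    rcases eq_or_ne n 0 with rfl | hn
    · simp
    rw [bitCompress_two_mul, Nat.bit0_bits n hn, Nat.mul_div_cancel_left n two_pos, ih]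
    simp
  | h_odd n ih =>
    rw [bitCompress_two_mul_add_one, Nat.bit1_bits, List.count_cons_self, pow_succ]
    have : 1 ≤ 2 ^ n.bits.count true := Nat.one_le_two_pow
    simp only [show (2 * n + 1) / 2 = n by omega, ih]
    omega

theorem bitCompress_lt_bitCompress_iff {n s t : ℕ} (hs : s &&& n = s) (ht : t &&& n = t) :
    bitCompress n s < bitCompress n t ↔ s < t := by
  induction n using Nat.evenOddRec generalizing s t with
  | h0 => simp_all [eq_comm]
  | h_even n ih =>
    rw [Nat.land_two_mul_eq_left_iff] at hs ht
    rw [bitCompress_two_mul, bitCompress_two_mul, ih hs.1 ht.1]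
    omega
  | h_odd n ih =>
    rw [Nat.land_two_mul_add_one_eq_left_iff] at hs ht
    rw [bitCompress_two_mul_add_one, bitCompress_two_mul_add_one]
    have := ih hs ht
    have := ih ht hs
    omega

theorem bitCompress_injOn (n : ℕ) : Set.InjOn (bitCompress n) {s | s &&& n = s} :=
  fun s hs t ht h => by
    have := bitCompress_lt_bitCompress_iff hs ht
    have := bitCompress_lt_bitCompress_iff ht hs
    omega

theorem exists_bitCompress_eq {n j : ℕ} (hj : j ≤ bitCompress n n) :
    ∃ s, s &&& n = s ∧ bitCompress n s = j := by
  induction n using Nat.evenOddRec generalizing j with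
  | h0 => exact ⟨0, by simp_all⟩
  | h_even n ih =>
    rw [bitCompress_two_mul, Nat.mul_div_cancel_left n two_pos] at hj
    obtain ⟨s, hs, rfl⟩ := ih hj
    exact ⟨2 * s, by simp [Nat.land_two_mul_eq_left_iff, hs], by simp [bitCompress_two_mul]⟩
  | h_odd n ih =>
    rw [bitCompress_two_mul_add_one, show (2 * n + 1) / 2 = n by omega] at hj
    obtain ⟨s, hs, hsj⟩ := ih (j := j / 2) (by omega)
    refine ⟨2 * s + j % 2, ?_, ?_⟩
    · rw [Nat.land_two_mul_add_one_eq_left_iff]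
      simpa [show (2 * s + j % 2) / 2 = s by omega] using hs
    · rw [bitCompress_two_mul_add_one, show (2 * s + j % 2) / 2 = s by omega, hsj]
      omega

theorem bitCompress_land {n s t : ℕ} (hs : s &&& n = s) (ht : t &&& n = t) :
    bitCompress n (s &&& t) = bitCompress n s &&& bitCompress n t := by
  induction n using Nat.evenOddRec generalizing s t with
  | h0 => simp_all [eq_comm]
  | h_even n ih =>
    rw [Nat.land_two_mul_eq_left_iff] at hs ht
    simp only [bitCompress_two_mul, Nat.and_div_two, ih hs.1 ht.1]
  | h_odd n ih =>
    rw [Nat.land_two_mul_add_one_eq_left_iff] at hs ht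
    simp only [bitCompress_two_mul_add_one, Nat.and_div_two, ih hs ht]
    set a := bitCompress n (s / 2)
    set b := bitCompress n (t / 2)
    have hdiv : (2 * a + s % 2 &&& 2 * b + t % 2) / 2 = a &&& b := by
      rw [Nat.and_div_two]; congr 1 <;> omega
    have hmod := Nat.and_mod_two_eq_one (a := 2 * a + s % 2) (b := 2 * b + t % 2)
    have hmod' := Nat.and_mod_two_eq_one (a := s) (b := t)
    omega

open Equiv

section PrefixDecomposition

variable {m n : ℕ}

theorem mem_descSet {π : Perm (Fin n)} {x : ℕ} :
    x ∈ descSet n π ↔ ∃ (hx : x < n) (_ : 1 ≤ x), π ⟨x, hx⟩ < π ⟨x - 1, by omega⟩ := by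
  simp only [descSet, mem_filter, mem_Icc]
  grind

theorem apply_lt_apply_succ_of_notMem_descSet {π : Perm (Fin n)} {x : ℕ} (hx : x + 1 < n)
    (h : x + 1 ∉ descSet n π) : π ⟨x, by omega⟩ < π ⟨x + 1, hx⟩ := by
  simp only [mem_descSet, not_exists, not_lt] at h
  refine lt_of_le_of_ne (h hx (by omega)) fun he => ?_
  simpa using π.injective he

theorem apply_lt_apply_of_descSet_le {π : Perm (Fin n)} (h : ∀ x ∈ descSet n π, x ≤ m)
    {i j : Fin n} (hi : m ≤ i) (hij : i < j) : π i < π j := by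
  obtain ⟨i, hi'⟩ := i
  obtain ⟨j, hj⟩ := j
  simp only [Fin.mk_lt_mk] at hij hi
  induction j, hij using Nat.le_induction with
  | base => exact apply_lt_apply_succ_of_notMem_descSet hj fun hd => by have := h _ hd; omega
  | succ j hj' ih =>
    exact (ih (by omega)).trans
      (apply_lt_apply_succ_of_notMem_descSet hj fun hd => by have := h _ hd; omega)

theorem card_compl_of_card_eq {A : Finset (Fin n)} (hA : A.card = m) : Aᶜ.card = n - m := by
  simp [card_compl, hA]

/-- The permutation whose first `m` values are the elements of `A` in the relative order `σ`,
followed by the elements of `Aᶜ` in increasing order. -/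
noncomputable def merge (hmn : m ≤ n) (A : Finset (Fin n)) (hA : A.card = m) (σ : Perm (Fin m)) :
    Perm (Fin n) :=
  (finCongr (Nat.add_sub_cancel' hmn).symm).trans <| finSumFinEquiv.symm.trans <|
    (sumCongr (σ.trans (A.orderIsoOfFin hA).toEquiv)
      ((Aᶜ.orderIsoOfFin (card_compl_of_card_eq hA)).toEquiv.trans
        (subtypeEquivRight fun _ => mem_compl))).trans (sumCompl (· ∈ A))

theorem merge_apply_of_lt (hmn : m ≤ n) {A : Finset (Fin n)} (hA : A.card = m)
    (σ : Perm (Fin m)) {i : Fin n} (hi : (i : ℕ) < m) :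
    merge hmn A hA σ i = A.orderEmbOfFin hA (σ ⟨i, hi⟩) := by
  have : finCongr (Nat.add_sub_cancel' hmn).symm i = Fin.castAdd (n - m) ⟨i, hi⟩ := rfl
  simp only [merge, Equiv.trans_apply, this, finSumFinEquiv_symm_apply_castAdd,
    sumCongr_apply, Sum.map_inl, sumCompl_apply_inl]
  rfl

theorem merge_apply_of_le (hmn : m ≤ n) {A : Finset (Fin n)} (hA : A.card = m)
    (σ : Perm (Fin m)) {i : Fin n} (hi : m ≤ (i : ℕ)) :
    merge hmn A hA σ i = Aᶜ.orderEmbOfFin (card_compl_of_card_eq hA) ⟨i - m, by omega⟩ := by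
  have : finCongr (Nat.add_sub_cancel' hmn).symm i = Fin.natAdd m ⟨i - m, by omega⟩ :=
    Fin.ext (by simp; omega)
  simp only [merge, Equiv.trans_apply, this, finSumFinEquiv_symm_apply_natAdd,
    sumCongr_apply, Sum.map_inr, sumCompl_apply_inr]
  rfl

theorem descSet_merge_subset (hmn : m ≤ n) {A : Finset (Fin n)} (hA : A.card = m)
    (σ : Perm (Fin m)) : descSet n (merge hmn A hA σ) ⊆ insert m (descSet m σ) := by
  intro x hx
  obtain ⟨hxn, hx1, hlt⟩ := mem_descSet.mp hx
  rcases lt_trichotomy x m with hxm | rfl | hmx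
  · rw [merge_apply_of_lt hmn hA σ (i := ⟨x, hxn⟩) hxm,
      merge_apply_of_lt hmn hA σ (i := ⟨x - 1, by omega⟩) (by simp; omega),
      OrderEmbedding.lt_iff_lt] at hlt
    exact mem_insert_of_mem (mem_descSet.mpr ⟨hxm, hx1, hlt⟩)
  · exact mem_insert_self _ _
  · rw [merge_apply_of_le hmn hA σ (i := ⟨x, hxn⟩) hmx.le,
      merge_apply_of_le hmn hA σ (i := ⟨x - 1, by omega⟩) (by simp; omega),
      OrderEmbedding.lt_iff_lt, Fin.mk_lt_mk] at hlt
    simp at hlt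
    omega

def prefixValues (hmn : m ≤ n) (π : Perm (Fin n)) : Finset (Fin n) :=
  univ.map ((Fin.castLEEmb hmn).trans π.toEmbedding)

theorem card_prefixValues (hmn : m ≤ n) (π : Perm (Fin n)) : (prefixValues hmn π).card = m := by
  simp [prefixValues]

/-- The relative order of `π 0, …, π (m - 1)`, as a permutation of `Fin m`. -/
noncomputable def prefixPattern (hmn : m ≤ n) (π : Perm (Fin n)) : Perm (Fin m) :=
  Equiv.ofBijective
    (fun i => ((prefixValues hmn π).orderIsoOfFin (card_prefixValues hmn π)).symm
      ⟨π (Fin.castLE hmn i), by simp [prefixValues]⟩)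
    (Finite.injective_iff_bijective.mp fun i j h => by simpa [Subtype.ext_iff] using h)

theorem orderEmbOfFin_prefixPattern (hmn : m ≤ n) {π : Perm (Fin n)} {A : Finset (Fin n)}
    (hA : A.card = m) (h : prefixValues hmn π = A) (i : Fin m) :
    A.orderEmbOfFin hA (prefixPattern hmn π i) = π (Fin.castLE hmn i) := by
  subst h
  rw [← coe_orderIsoOfFin_apply]
  simp [prefixPattern]

theorem descSet_prefixPattern (hmn : m ≤ n) (π : Perm (Fin n)) :
    descSet m (prefixPattern hmn π) = (descSet n π).filter (· < m) := by
  have hlt (i j : Fin m) : prefixPattern hmn π i < prefixPattern hmn π j ↔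
      π (Fin.castLE hmn i) < π (Fin.castLE hmn j) := by
    simp only [← orderEmbOfFin_prefixPattern hmn (card_prefixValues hmn π) rfl,
      OrderEmbedding.lt_iff_lt]
  ext x
  simp only [mem_filter, mem_descSet, hlt]
  constructor
  · rintro ⟨hxm, hx1, hdesc⟩
    exact ⟨⟨by omega, hx1, hdesc⟩, hxm⟩
  · rintro ⟨⟨hxn, hx1, hdesc⟩, hxm⟩
    exact ⟨hxm, hx1, hdesc⟩

theorem prefixValues_merge (hmn : m ≤ n) {A : Finset (Fin n)} (hA : A.card = m)
    (σ : Perm (Fin m)) : prefixValues hmn (merge hmn A hA σ) = A := by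
  refine eq_of_subset_of_card_le (fun v hv => ?_) (by rw [card_prefixValues, hA])
  obtain ⟨i, -, rfl⟩ := mem_map.mp hv
  simp only [Function.Embedding.trans_apply, Fin.castLEEmb_apply, Equiv.coe_toEmbedding]
  rw [merge_apply_of_lt hmn hA σ (by simp)]
  exact orderEmbOfFin_mem A hA _

theorem prefixPattern_merge (hmn : m ≤ n) {A : Finset (Fin n)} (hA : A.card = m)
    (σ : Perm (Fin m)) : prefixPattern hmn (merge hmn A hA σ) = σ := by
  ext1 i
  apply (A.orderEmbOfFin hA).injective
  rw [orderEmbOfFin_prefixPattern hmn hA (prefixValues_merge hmn hA σ),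
    merge_apply_of_lt hmn hA σ (by simp)]
  rfl

theorem merge_prefixValues_prefixPattern (hmn : m ≤ n) {π : Perm (Fin n)}
    (h : ∀ x ∈ descSet n π, x ≤ m) :
    merge hmn (prefixValues hmn π) (card_prefixValues hmn π) (prefixPattern hmn π) = π := by
  ext1 i
  by_cases hi : (i : ℕ) < m
  · rw [merge_apply_of_lt hmn _ _ hi,
      orderEmbOfFin_prefixPattern hmn (card_prefixValues hmn π) rfl]
    rfl
  · push Not at hi
    rw [merge_apply_of_le hmn _ _ hi]
    have hmem (j : Fin (n - m)) : π ⟨m + j, by omega⟩ ∈ (prefixValues hmn π)ᶜ := by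
      simp [prefixValues, Fin.ext_iff]
      omega
    have hmono : StrictMono fun j : Fin (n - m) => π ⟨m + j, by omega⟩ :=
      fun j j' hjj' => apply_lt_apply_of_descSet_le h (by simp) (by simpa using hjj')
    rw [← orderEmbOfFin_unique _ hmem hmono]
    exact congrArg π (Fin.ext (by simp; omega))

theorem descAlpha_insert (hmn : m ≤ n) {T : Finset ℕ} (hT : ∀ t ∈ T, t < m) :
    descAlpha n (insert m T) = n.choose m * descAlpha m T := by
  have hrhs : n.choose m * descAlpha m T = (powersetCard m (univ : Finset (Fin n)) ×ˢ
      univ.filter (fun σ : Perm (Fin m) => descSet m σ ⊆ T)).card := by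
    rw [card_product, card_powersetCard, card_univ, Fintype.card_fin, descAlpha]
  rw [hrhs, descAlpha]
  refine card_bij' (fun π _ => (prefixValues hmn π, prefixPattern hmn π))
    (fun p hp => merge hmn p.1 (mem_powersetCard_univ.mp (mem_product.mp hp).1) p.2)
    ?_ ?_ ?_ ?_
  · intro π hπ
    simp only [mem_product, mem_powersetCard_univ, card_prefixValues, mem_filter, mem_univ,
      true_and, descSet_prefixPattern] at hπ ⊢
    intro x hx
    obtain ⟨hxπ, hxm⟩ := mem_filter.mp hx
    exact (mem_insert.mp (hπ hxπ)).resolve_left hxm.ne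
  · rintro ⟨A, σ⟩ hp
    simp only [mem_product, mem_powersetCard_univ, mem_filter, mem_univ, true_and] at hp ⊢
    exact (descSet_merge_subset hmn _ σ).trans (insert_subset_insert m hp.2)
  · intro π hπ
    refine merge_prefixValues_prefixPattern hmn fun x hx => ?_
    rcases mem_insert.mp ((mem_filter.mp hπ).2 hx) with rfl | hxT
    exacts [le_rfl, (hT x hxT).le]
  · rintro ⟨A, σ⟩ hp
    simp only [prefixValues_merge, prefixPattern_merge]

end PrefixDecomposition

theorem descAlpha_empty (n : ℕ) : descAlpha n ∅ = 1 := by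
  have h0 : descAlpha n {0} = descAlpha n ∅ := by
    simp only [descAlpha, subset_singleton_iff, subset_empty]
    congr! 3 with π
    refine or_iff_left fun h => ?_
    have : 0 ∈ descSet n π := h ▸ mem_singleton_self 0
    simp [mem_descSet] at this
  rw [← h0, ← insert_empty, descAlpha_insert (Nat.zero_le n) (by simp), Nat.choose_zero_right,
    one_mul]
  rfl

theorem isChain_insert_of_le {T : Finset ℕ} {n : ℕ} (hT : ∀ t ∈ T, t ≤ n) :
    IsChain (fun s t : ℕ => s &&& t = s) ↑(insert n T) ↔
      IsChain (fun s t : ℕ => s &&& t = s) ↑T ∧ ∀ t ∈ T, t &&& n = t := by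
  have : Std.Symm fun s t : ℕ => s &&& t = s ∨ t &&& s = t := ⟨fun _ _ => Or.symm⟩
  rw [coe_insert, IsChain, Set.pairwise_insert_of_symm]
  refine and_congr_right fun _ => ⟨fun h t ht => ?_, fun h t ht _ => Or.inr (h t ht)⟩
  rcases eq_or_ne n t with rfl | hnt
  · exact Nat.and_self n
  · refine (h t ht hnt).resolve_left fun hn => ?_
    have := hT t ht
    have : n ≤ t := hn ▸ Nat.and_le_right
    omega

theorem odd_descAlpha_iff {n : ℕ} {T : Finset ℕ} (hT : ∀ t ∈ T, t ≤ n) :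
    Odd (descAlpha n T) ↔ IsChain (fun s t : ℕ => s &&& t = s) ↑(insert n T) := by
  induction T using Finset.induction_on_max generalizing n with
  | empty => simp [descAlpha_empty]
  | insert a T hTa ih =>
    have han : a ≤ n := hT a (mem_insert_self a T)
    rw [descAlpha_insert han hTa, Nat.odd_mul, Nat.odd_choose_iff_land_eq_left,
      ih fun t ht => (hTa t ht).le, isChain_insert_of_le hT,
      isChain_insert_of_le fun t ht => (hTa t ht).le, forall_mem_insert]
    constructor
    · rintro ⟨han, hchain, hsub⟩
      exact ⟨⟨hchain, hsub⟩, han, fun t ht => Nat.land_eq_left_trans (hsub t ht) han⟩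
    · rintro ⟨⟨hchain, hsub⟩, han, -⟩
      exact ⟨han, hchain, hsub⟩

theorem descAlpha_eq_sum_descBeta (n : ℕ) (S : Finset ℕ) :
    descAlpha n S = ∑ T ∈ S.powerset, descBeta n T := by
  rw [descAlpha, card_eq_sum_card_fiberwise (f := descSet n) (t := S.powerset)
    fun π hπ => mem_powerset.mpr (mem_filter.mp hπ).2]
  refine sum_congr rfl fun T hT => ?_
  rw [descBeta, filter_filter]
  congr! 2 with π
  exact and_iff_right_of_imp fun h => h ▸ mem_powerset.mp hT

/-- Möbius inversion on the Boolean lattice, where the signs disappear modulo 2. -/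
theorem descBeta_eq_sum_descAlpha (n : ℕ) (S : Finset ℕ) :
    (descBeta n S : ZMod 2) = ∑ T ∈ S.powerset, (descAlpha n T : ZMod 2) := by
  simp_rw [descAlpha_eq_sum_descBeta, Nat.cast_sum]
  rw [sum_comm' (t' := S.powerset) (s' := fun U => Icc U S) fun T U => by
    simp only [mem_powerset, mem_Icc]
    exact ⟨fun ⟨hTS, hUT⟩ => ⟨⟨hUT, hTS⟩, hUT.trans hTS⟩, fun ⟨⟨hUT, hTS⟩, _⟩ => ⟨hTS, hUT⟩⟩]
  rw [sum_eq_single_of_mem S (mem_powerset_self S) fun U hU hUS => ?_]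
  · simp
  have hlt : U.card < S.card := card_lt_card (ssubset_of_subset_of_ne (mem_powerset.mp hU) hUS)
  rw [sum_const, card_Icc_finset (mem_powerset.mp hU), nsmul_eq_mul, Nat.cast_pow,
    show ((2 : ℕ) : ZMod 2) = 0 from rfl, zero_pow (by omega), zero_mul]

theorem isChain_image_iff {α β : Type*} {r : α → α → Prop} {r' : β → β → Prop} {f : α → β}
    {U : Set α} (hf : U.InjOn f) (hr : ∀ x ∈ U, ∀ y ∈ U, r' (f x) (f y) ↔ r x y) :
    IsChain r' (f '' U) ↔ IsChain r U := by
  rw [IsChain, hf.pairwise_image]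
  refine ⟨fun h x hx y hy hxy => ?_, fun h x hx y hy hxy => ?_⟩ <;>
    simpa only [Function.onFun, hr x hx y hy, hr y hy x hx] using h hx hy hxy

theorem isChain_image_bitCompress_iff {n : ℕ} {U : Set ℕ} (hU : ∀ s ∈ U, s &&& n = s) :
    IsChain (fun s t : ℕ => s &&& t = s) (bitCompress n '' U) ↔
      IsChain (fun s t : ℕ => s &&& t = s) U := by
  refine isChain_image_iff ((bitCompress_injOn n).mono hU) fun s hs t ht => ?_
  have hst : s &&& t &&& n = s &&& t := by rw [Nat.and_assoc, hU t ht]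
  rw [← bitCompress_land (hU s hs) (hU t ht)]
  exact (bitCompress_injOn n).eq_iff hst (hU s hs)

theorem odd_descAlpha_bitCompress_iff {n : ℕ} {T : Finset ℕ} (hT : ∀ t ∈ T, t &&& n = t) :
    Odd (descAlpha (bitCompress n n) (T.image (bitCompress n))) ↔ Odd (descAlpha n T) := by
  have hn : n &&& n = n := Nat.and_self n
  rw [odd_descAlpha_iff, odd_descAlpha_iff fun t ht => Nat.le_of_land_eq_left (hT t ht), ← image_insert,
    coe_image, isChain_image_bitCompress_iff]
  · simpa using hT
  · simp only [mem_image, forall_exists_index, and_imp, forall_apply_eq_imp_iff₂]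
    exact fun t ht => not_lt.mp fun h => by
      have := (bitCompress_lt_bitCompress_iff hn (hT t ht)).mp h
      have := Nat.le_of_land_eq_left (hT t ht)
      omega

theorem image_bitCompress_essential (n : ℕ) :
    ((Icc 1 (n - 1)).filter (Essential n)).image (bitCompress n) =
      Icc 1 (bitCompress n n - 1) := by
  have hn : n &&& n = n := Nat.and_self n
  ext x
  simp only [mem_image, mem_filter, mem_Icc, Essential]
  constructor
  · rintro ⟨s, ⟨-, hs0, hsn, hs⟩, rfl⟩
    have h0 := (bitCompress_lt_bitCompress_iff (Nat.zero_and n) hs).mpr hs0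
    have h1 := (bitCompress_lt_bitCompress_iff hs hn).mpr hsn
    rw [bitCompress_zero_right] at h0
    omega
  · rintro ⟨hx0, hxn⟩
    obtain ⟨s, hs, rfl⟩ := exists_bitCompress_eq (n := n) (j := x) (by omega)
    have hs0 : s ≠ 0 := by rintro rfl; simp at hx0
    have hsn : s ≠ n := by rintro rfl; omega
    have := Nat.le_of_land_eq_left hs
    exact ⟨s, ⟨⟨by omega, by omega⟩, by omega, by omega, hs⟩, rfl⟩

theorem map_sort_eq_range' {E : Finset ℕ} {f : ℕ → ℕ} (hf : StrictMonoOn f E)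
    (himg : E.image f = Icc 1 E.card) : (E.sort (· ≤ ·)).map f = List.range' 1 E.card := by
  rw [← sort_val, Multiset.map_sort f E.val _ (· ≤ ·) fun a ha b hb => (hf.le_iff_le ha hb).symm,
    ← image_val_of_injOn hf.injOn, himg, sort_val]
  refine (sortedLT_sort _).eq_of_mem_iff (List.sortedLT_range' _ _ one_ne_zero) fun x => ?_
  simp only [mem_sort, mem_Icc, List.mem_range'_1]
  omega

theorem image_succ_filter_sort_eq_image {E S : Finset ℕ} {f : ℕ → ℕ} (hf : StrictMonoOn f E)
    (himg : E.image f = Icc 1 E.card) (hS : S ⊆ E) :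
    ((range (E.sort (· ≤ ·)).length).filter (fun i => (E.sort (· ≤ ·)).getD i 0 ∈ S)).image
      (· + 1) = S.image f := by
  set l := E.sort (· ≤ ·)
  have hidx (i : ℕ) (hi : i < l.length) : f l[i] = i + 1 := by
    have hlen : i < (l.map f).length := by simpa using hi
    rw [← List.getElem_map f (h := hlen), List.getElem_of_eq (map_sort_eq_range' hf himg) hlen,
      List.getElem_range', Nat.add_comm, Nat.one_mul]
  ext x
  simp only [mem_image, mem_filter, mem_range]
  constructor
  · rintro ⟨i, ⟨hi, hiS⟩, rfl⟩
    rw [List.getD_eq_getElem l 0 hi] at hiS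
    exact ⟨l[i], hiS, hidx i hi⟩
  · rintro ⟨s, hs, rfl⟩
    obtain ⟨i, hi, rfl⟩ := List.mem_iff_getElem.mp ((mem_sort (· ≤ ·)).mpr (hS hs))
    exact ⟨i, ⟨hi, by rwa [List.getD_eq_getElem l 0 hi]⟩, (hidx i hi).symm⟩

/-- If `n` has `k` ones in binary, `E = {e₁ < … < e_{2^k-1}}` is the set of essential
elements of `[n-1]`, `S ⊆ E`, and `Ŝ` is the set of (1-based) indices of the elements
of `S` in `E`, then `β_n(S) ≡ β_{2^k-1}(Ŝ) (mod 2)`. -/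
theorem stmt_6 (n k : ℕ) (hk : (Nat.bits n).count true = k)
    (E : Finset ℕ) (hE : E = (Finset.Icc 1 (n - 1)).filter (Essential n))
    (S : Finset ℕ) (hS : S ⊆ E)
    (l : List ℕ) (hl : l = E.sort (· ≤ ·))
    (hatS : Finset ℕ)
    (hhatS : hatS = ((Finset.range l.length).filter
      (fun i => l.getD i 0 ∈ S)).image (· + 1)) :
    descBeta n S ≡ descBeta (2 ^ k - 1) hatS [MOD 2] := by
  subst hl hhatS
  have hsub : ∀ s ∈ E, s &&& n = s := by
    rw [hE]
    exact fun s hs => (mem_filter.mp hs).2.2.2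
  have hinj : Set.InjOn (bitCompress n) E := (bitCompress_injOn n).mono hsub
  have hmono : StrictMonoOn (bitCompress n) E := fun s hs t ht hst =>
    (bitCompress_lt_bitCompress_iff (hsub s hs) (hsub t ht)).mpr hst
  have himg : E.image (bitCompress n) = Icc 1 E.card := by
    rw [← card_image_of_injOn hinj, hE, image_bitCompress_essential, Nat.card_Icc,
      Nat.add_sub_cancel]
  rw [image_succ_filter_sort_eq_image hmono himg hS, ← hk, ← bitCompress_self,
    ← ZMod.natCast_eq_natCast_iff, descBeta_eq_sum_descAlpha, descBeta_eq_sum_descAlpha,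
    powerset_image, sum_image (image_injOn_powerset_of_injOn (hinj.mono hS))]
  refine sum_congr rfl fun T hT => (ZMod.natCast_eq_natCast_iff' _ _ 2).mpr ?_
  have hpar := odd_descAlpha_bitCompress_iff fun t ht => hsub t (hS (mem_powerset.mp hT ht))
  rw [Nat.odd_iff, Nat.odd_iff] at hpar
  omega
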